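/- Let Ā be the 5×5 matrix over F₂ = ℤ/2ℤ with rows (1,1,0,0,0), (1,1,1,0,0), (1,1,1,1,0), (0,1,1,1,1), (0,0,1,1,1), let S := Ā⁻¹ · Āᵀ, and let a₁ = (1,0,0,0,0)ᵀ and b₁ = (1,0,1,0,0)ᵀ in F₂⁵. Then the orbit {Sᵏ a₁ : k ∈ ℤ} has exactly 8 elements, the orbit {Sᵏ b₁ : k ∈ ℤ} has exactly 4 elements, these two orbits are disjoint, and their union is exactly the set of vectors x ∈ F₂⁵ with xᵀ Ā x = 1. -/

import Mathlib

/-!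
Computed explicitly, `S` is the matrix `Sbar` below, and `Sbar ^ 8 = 1`. Hence every orbit
`{Sᵏ v : k ∈ ℤ}` is the image of `k ∈ {0, …, 7}`, and all four claims become finite
computations over the 32 vectors of `F₂⁵`, which the kernel decides.
-/

namespace Matrix

variable {n R : Type*} [Fintype n] [DecidableEq n] [CommRing R]

theorem zpow_eq_pow_toNat_emod {M : Matrix n n R} {m : ℕ} (hm : m ≠ 0) (hM : M ^ m = 1)
    (k : ℤ) : M ^ k = M ^ (k % m).toNat := by
  set u := Units.ofPowEqOne M m hM hm
  calc M ^ k = ((u ^ k : (Matrix n n R)ˣ) : Matrix n n R) := (coe_units_zpow u k).symm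
    _ = ((u ^ (k % m).toNat : (Matrix n n R)ˣ) : Matrix n n R) := by
      rw [zpow_eq_zpow_emod' k (Units.pow_ofPowEqOne hM hm), ← zpow_natCast,
        Int.toNat_of_nonneg (Int.emod_nonneg k (by exact_mod_cast hm))]
    _ = M ^ (k % m).toNat := by simp [u]

theorem setOf_exists_zpow_mulVec_eq_image_range [DecidableEq R] {M : Matrix n n R} {m : ℕ}
    (hm : m ≠ 0) (hM : M ^ m = 1) (v : n → R) :
    {x | ∃ k : ℤ, x = (M ^ k) *ᵥ v} =
      ((Finset.range m).image fun i => (M ^ i) *ᵥ v : Set (n → R)) := by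
  ext x
  simp only [Set.mem_ofPred_eq, Finset.coe_image, Set.mem_image, Finset.mem_coe,
    Finset.mem_range]
  constructor
  · rintro ⟨k, rfl⟩
    refine ⟨(k % m).toNat, ?_, by rw [zpow_eq_pow_toNat_emod hm hM]⟩
    have := Int.emod_lt_of_pos k (by omega : (0 : ℤ) < m)
    omega
  · rintro ⟨i, -, rfl⟩
    exact ⟨i, by rw [zpow_natCast]⟩

end Matrix

def Abar : Matrix (Fin 5) (Fin 5) (ZMod 2) :=
  !![1,1,0,0,0; 1,1,1,0,0; 1,1,1,1,0; 0,1,1,1,1; 0,0,1,1,1]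

def Sbar : Matrix (Fin 5) (Fin 5) (ZMod 2) :=
  !![1,1,0,0,0; 0,0,1,0,0; 0,0,0,1,0; 1,0,0,0,1; 1,0,0,0,0]

theorem Abar_inv : Abar⁻¹ = !![1,0,0,1,1; 0,0,0,1,1; 1,1,0,0,0; 0,1,1,0,0; 1,0,1,0,1] :=
  Matrix.inv_eq_right_inv (by decide)

theorem Abar_inv_mul_transpose : Abar⁻¹ * Abar.transpose = Sbar := by
  rw [Abar_inv]; decide

theorem Sbar_pow_eight : Sbar ^ 8 = 1 := by decide

/-- Let `Ā` be the given `5×5` matrix over `F₂ = ℤ/2ℤ`,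
`S := Ā⁻¹ · Āᵀ`, `a₁ = (1,0,0,0,0)ᵀ` and `b₁ = (1,0,1,0,0)ᵀ`. Then the orbit
`{Sᵏ a₁ : k ∈ ℤ}` has exactly `8` elements, the orbit `{Sᵏ b₁ : k ∈ ℤ}` has exactly `4`
elements, these two orbits are disjoint, and their union is exactly the set of vectors
`x ∈ F₂⁵` with `xᵀ Ā x = 1`. -/
theorem stmt_9 (A : Matrix (Fin 5) (Fin 5) (ZMod 2))
    (hA : A = !![1,1,0,0,0; 1,1,1,0,0; 1,1,1,1,0; 0,1,1,1,1; 0,0,1,1,1])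
    (S : Matrix (Fin 5) (Fin 5) (ZMod 2)) (hS : S = A⁻¹ * A.transpose)
    (a₁ b₁ : Fin 5 → ZMod 2) (ha₁ : a₁ = ![1,0,0,0,0]) (hb₁ : b₁ = ![1,0,1,0,0]) :
    Set.ncard {x : Fin 5 → ZMod 2 | ∃ k : ℤ, x = (S ^ k).mulVec a₁} = 8 ∧
    Set.ncard {x : Fin 5 → ZMod 2 | ∃ k : ℤ, x = (S ^ k).mulVec b₁} = 4 ∧
    Disjoint {x : Fin 5 → ZMod 2 | ∃ k : ℤ, x = (S ^ k).mulVec a₁}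
      {x : Fin 5 → ZMod 2 | ∃ k : ℤ, x = (S ^ k).mulVec b₁} ∧
    {x : Fin 5 → ZMod 2 | ∃ k : ℤ, x = (S ^ k).mulVec a₁} ∪
        {x : Fin 5 → ZMod 2 | ∃ k : ℤ, x = (S ^ k).mulVec b₁} =
      {x : Fin 5 → ZMod 2 | dotProduct x (A.mulVec x) = 1} := by
  obtain rfl : A = Abar := hA
  obtain rfl : S = Sbar := hS.trans Abar_inv_mul_transpose
  subst ha₁ hb₁
  simp only [Matrix.setOf_exists_zpow_mulVec_eq_image_range (by norm_num) Sbar_pow_eight]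
  refine ⟨?_, ?_, ?_, ?_⟩
  · rw [Set.ncard_coe_finset]; decide
  · rw [Set.ncard_coe_finset]; decide
  · rw [Finset.disjoint_coe]; decide
  · rw [← Finset.coe_union]
    ext x
    simp only [Finset.mem_coe, Set.mem_ofPred_eq]
    revert x
    decide
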